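/- The sunny-side-up at (0,0) is not sofic on the Barbieri–Sablik H-graph: there do not exist a finite colour set B, a tileset Θ ⊆ B × {x,y,z} × B and a map π : B → {0,1} such that the set {π ∘ τ : τ a valid Θ-tiling of the H-graph} equals the singleton consisting of the indicator function of {(0,0)} ⊆ ℕ × ℤ. -/

import Mathlib

/-!  Common definitions for the Barbieri–Sablik H-graph.  Its vertex set is `ℕ × ℤ`. -/

/-- The three edge labels of the H-graph. -/
inductive HLab : Type
  | x : HLab
  | y : HLab
  | z : HLab
deriving DecidableEq

instance : Primcodable HLab :=
  Primcodable.ofEquiv (Fin 3)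
    { toFun := fun l => match l with | .x => 0 | .y => 1 | .z => 2
      invFun := fun i => match i with | 0 => .x | 1 => .y | 2 => .z
      left_inv := by intro l; cases l <;> rfl
      right_inv := by intro i; fin_cases i <;> rfl }

/-- The `x`-neighbour of a vertex: `(2m,n)` and `(2m+1,n)` are exchanged. -/
def xNbr : ℕ × ℤ → ℕ × ℤ := fun p => (if p.1 % 2 = 0 then p.1 + 1 else p.1 - 1, p.2)

/-- The `y`-neighbour of a vertex: for even `k ≥ 2` and `2^(v₂ k) ∣ n`, the vertices
`(k-1,n)` and `(k,n)` are exchanged; all other vertices (namely `(0,n)`, and `(k-1,n)`,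
`(k,n)` with `2^(v₂ k) ∤ n`) carry a `y`-labelled loop, i.e. are fixed. -/
def yNbr : ℕ × ℤ → ℕ × ℤ := fun p =>
  if p.1 = 0 then p
  else if p.1 % 2 = 1 then
    (if ((2 : ℤ) ^ padicValNat 2 (p.1 + 1)) ∣ p.2 then (p.1 + 1, p.2) else p)
  else
    (if ((2 : ℤ) ^ padicValNat 2 p.1) ∣ p.2 then (p.1 - 1, p.2) else p)

/-- A map `τ : ℕ × ℤ → B` is a valid `Θ`-tiling of the H-graph if the endpoint colours of
every labelled edge (in both directions, for the unoriented `x`- and `y`-edges) form a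
triple in `Θ`; there is a `z`-labelled edge from `(m,n)` to `(m,n+1)` for every vertex. -/
def HValid {B : Type} (Θ : Set (B × HLab × B)) (τ : ℕ × ℤ → B) : Prop :=
  ∀ p : ℕ × ℤ,
    (τ p, HLab.z, τ (p.1, p.2 + 1)) ∈ Θ ∧
    (τ p, HLab.x, τ (xNbr p)) ∈ Θ ∧
    (τ p, HLab.y, τ (yNbr p)) ∈ Θ

/-!
Shifting a tiling up by `2 ^ L` preserves every constraint in the columns `m < 2 ^ L`, since
there the `y`-edges only depend on `n` modulo `2 ^ L`. Starting from a tiling that projects to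
the sunny-side-up, an ultrafilter limit of these shifts (which exists because `B` is finite) is
again a valid tiling; but its colour at `(0,0)` is seen at `(0, 2 ^ L)` in the original tiling,
where the projection is `false`, so it does not project to the sunny-side-up.
-/

open Filter

def HValidAt {B : Type} (Θ : Set (B × HLab × B)) (τ : ℕ × ℤ → B) (p : ℕ × ℤ) : Prop :=
  (τ p, HLab.z, τ (p.1, p.2 + 1)) ∈ Θ ∧
  (τ p, HLab.x, τ (xNbr p)) ∈ Θ ∧
  (τ p, HLab.y, τ (yNbr p)) ∈ Θ

theorem padicValNat_two_le_of_le_two_pow {m L : ℕ} (hm : 0 < m) (hmL : m ≤ 2 ^ L) :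
    padicValNat 2 m ≤ L :=
  (Nat.pow_le_pow_iff_right one_lt_two).mp ((Nat.le_of_dvd hm pow_padicValNat_dvd).trans hmL)

theorem yNbr_add_snd {L : ℕ} {k : ℤ} (hk : (2 : ℤ) ^ L ∣ k) {p : ℕ × ℤ} (hp : p.1 < 2 ^ L) :
    yNbr (p.1, p.2 + k) = ((yNbr p).1, (yNbr p).2 + k) := by
  obtain ⟨m, n⟩ := p
  have hdvd : ∀ j, 0 < j → j ≤ 2 ^ L →
      ((2 : ℤ) ^ padicValNat 2 j ∣ n + k ↔ (2 : ℤ) ^ padicValNat 2 j ∣ n) := fun j hj hjL =>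
    dvd_add_left ((pow_dvd_pow 2 (padicValNat_two_le_of_le_two_pow hj hjL)).trans hk)
  simp only at hp
  unfold yNbr
  by_cases h0 : m = 0
  · simp [h0]
  by_cases hodd : m % 2 = 1
  · simp only [h0, hodd, if_false, if_true, hdvd (m + 1) (by omega) hp]
    split_ifs <;> rfl
  · simp only [h0, hodd, if_false, hdvd m (by omega) hp.le]
    split_ifs <;> rfl

theorem HValid.hValidAt_vshift {B : Type} {Θ : Set (B × HLab × B)} {τ : ℕ × ℤ → B}
    (hτ : HValid Θ τ) {L : ℕ} {p : ℕ × ℤ} (hp : p.1 < 2 ^ L) :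
    HValidAt Θ (fun q => τ (q.1, q.2 + 2 ^ L)) p := by
  obtain ⟨hz, hx, hy⟩ := hτ (p.1, p.2 + 2 ^ L)
  refine ⟨?_, hx, ?_⟩
  · simpa only [add_right_comm] using hz
  · rwa [yNbr_add_snd dvd_rfl hp] at hy

theorem exists_hValid_eventually_eq {B ι : Type} [Finite B] {Θ : Set (B × HLab × B)}
    (𝒰 : Ultrafilter ι) (σ : ι → ℕ × ℤ → B) (hσ : ∀ p, ∀ᶠ i in 𝒰, HValidAt Θ (σ i) p) :
    ∃ τ, HValid Θ τ ∧ ∀ p, ∀ᶠ i in 𝒰, σ i p = τ p := by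
  choose τ hτ using fun p =>
    (Ultrafilter.eventually_exists_iff (P := fun b i => σ i p = b)).mp
      (Eventually.of_forall fun i => ⟨σ i p, rfl⟩)
  refine ⟨τ, fun p => ?_, hτ⟩
  obtain ⟨i, hi, h0, h1, hx, hy⟩ :=
    ((hσ p).and ((hτ p).and ((hτ (p.1, p.2 + 1)).and ((hτ (xNbr p)).and (hτ (yNbr p)))))).exists
  simpa only [HValidAt, h0, h1, hx, hy] using hi

/-- **The sunny-side-up at `(0,0)` is not sofic on the Barbieri–Sablik H-graph**: there are
no finite colour set `B`, tileset `Θ ⊆ B × {x,y,z} × B` and projection `π : B → {0,1}`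
(here `{0,1}` is `Bool`) such that the projections `π ∘ τ` of the valid `Θ`-tilings `τ` are
exactly the indicator function of `{(0,0)} ⊆ ℕ × ℤ`. -/
theorem hgraph_sunny_side_up_not_sofic :
    ¬ ∃ (B : Type) (_ : Fintype B) (Θ : Set (B × HLab × B)) (π : B → Bool),
        (fun τ : ℕ × ℤ → B => π ∘ τ) '' {τ | HValid Θ τ}
          = {fun p : ℕ × ℤ => decide (p = ((0 : ℕ), (0 : ℤ)))} := by
  rintro ⟨B, _, Θ, π, h⟩
  have hsunny : ∀ τ, HValid Θ τ → π ∘ τ = fun p => decide (p = ((0 : ℕ), (0 : ℤ))) :=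
    fun τ hτ => Set.mem_singleton_iff.mp (h ▸ Set.mem_image_of_mem _ hτ)
  obtain ⟨τ, hτ, hπτ⟩ : (fun p : ℕ × ℤ => decide (p = ((0 : ℕ), (0 : ℤ)))) ∈
      (fun τ : ℕ × ℤ → B => π ∘ τ) '' {τ | HValid Θ τ} := h ▸ rfl
  have hcols : ∀ m : ℕ, ∀ᶠ L in (hyperfilter ℕ : Filter ℕ), m < 2 ^ L := fun m =>
    hyperfilter_le_cofinite.trans_eq Nat.cofinite_eq_atTop <|
      (tendsto_pow_atTop_atTop_of_one_lt one_lt_two).eventually_gt_atTop m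
  obtain ⟨τ', hτ', hlim⟩ := exists_hValid_eventually_eq (hyperfilter ℕ)
    (fun L q => τ (q.1, q.2 + 2 ^ L)) fun p => (hcols p.1).mono fun L => hτ.hValidAt_vshift
  obtain ⟨L, hL⟩ := (hlim (0, 0)).exists
  have hcentre := congrFun (hsunny τ' hτ') (0, 0)
  have hshifted := congrFun hπτ (0, 2 ^ L)
  simp_all
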